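/- arXiv:1110.4554 — 3 statements merged into one kernel-verified Lean document; each statement's English description precedes it below -/
import Mathlib

section
/- Let Φ = (Γ, φ) be a complex unit gain graph on a connected graph Γ. Then the largest Laplacian eigenvalue satisfies λ_1(L(Φ)) ≤ λ_1(Q(Γ)), where Q(Γ) = D(Γ) + A(Γ) is the signless Laplacian of the underlying unsigned graph. -/
/-!
Let `v` be a unit eigenvector of `L(Φ)` for its largest eigenvalue, and `|v|` the vector of the
moduli of its entries. Since the gains have modulus one, every term `conj vᵢ · L(Φ)ᵢⱼ · vⱼ` of the
quadratic form has real part at most the corresponding term `|vᵢ| Q(Γ)ᵢⱼ |vⱼ|`, so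
`λ₁(L(Φ)) = v* L(Φ) v ≤ |v|ᵀ Q(Γ) |v| ≤ λ₁(Q(Γ))` by the Rayleigh–Ritz bound.
-/

open Matrix

namespace Matrix

variable {𝕜 ι : Type*} [RCLike 𝕜]

theorem re_star_mul_mul_le_of_norm_le {M N : Matrix ι ι 𝕜}
    (hdiag : ∀ a, RCLike.re (M a a) ≤ RCLike.re (N a a))
    (hoff : ∀ a b, a ≠ b → ‖M a b‖ ≤ RCLike.re (N a b)) (v : ι → 𝕜) (a b : ι) :
    RCLike.re (star (v a) * M a b * v b) ≤ ‖v a‖ * ‖v b‖ * RCLike.re (N a b) := by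
  rcases eq_or_ne a b with rfl | hab
  · rw [mul_right_comm, RCLike.star_def, RCLike.conj_mul, ← RCLike.ofReal_pow,
      RCLike.re_ofReal_mul, ← sq]
    exact mul_le_mul_of_nonneg_left (hdiag a) (by positivity)
  · calc RCLike.re (star (v a) * M a b * v b) ≤ ‖star (v a) * M a b * v b‖ := RCLike.re_le_norm _
      _ = ‖v a‖ * ‖v b‖ * ‖M a b‖ := by rw [norm_mul, norm_mul, norm_star]; ring
      _ ≤ ‖v a‖ * ‖v b‖ * RCLike.re (N a b) := by gcongr; exact hoff a b hab

variable [Fintype ι]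

theorem re_star_dotProduct_mulVec_eq_sum (M : Matrix ι ι 𝕜) (v : ι → 𝕜) :
    RCLike.re (star v ⬝ᵥ M *ᵥ v) = ∑ a, ∑ b, RCLike.re (star (v a) * M a b * v b) := by
  simp only [dotProduct, mulVec, Finset.mul_sum, map_sum, Pi.star_apply, mul_assoc]

theorem re_star_dotProduct_mulVec_le_of_norm_le {M N : Matrix ι ι 𝕜}
    (hdiag : ∀ a, RCLike.re (M a a) ≤ RCLike.re (N a a))
    (hoff : ∀ a b, a ≠ b → ‖M a b‖ ≤ RCLike.re (N a b)) (v : ι → 𝕜) :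
    RCLike.re (star v ⬝ᵥ M *ᵥ v) ≤
      RCLike.re (star (fun i => (‖v i‖ : 𝕜)) ⬝ᵥ N *ᵥ fun i => (‖v i‖ : 𝕜)) := by
  rw [re_star_dotProduct_mulVec_eq_sum, re_star_dotProduct_mulVec_eq_sum]
  refine Finset.sum_le_sum fun a _ => Finset.sum_le_sum fun b _ => ?_
  refine (re_star_mul_mul_le_of_norm_le hdiag hoff v a b).trans_eq ?_
  rw [RCLike.star_def, RCLike.conj_ofReal, mul_right_comm (‖v a‖ : 𝕜), ← RCLike.ofReal_mul,
    RCLike.re_ofReal_mul]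

namespace IsHermitian

open WithLp

variable [DecidableEq ι] {A : Matrix ι ι 𝕜}

theorem re_star_dotProduct_mulVec_le_iSup_eigenvalues (hA : A.IsHermitian) (x : ι → 𝕜) :
    RCLike.re (star x ⬝ᵥ A *ᵥ x) ≤ (⨆ i, hA.eigenvalues i) * ∑ i, ‖x i‖ ^ 2 := by
  set b := hA.eigenvectorBasis
  set X : EuclideanSpace 𝕜 ι := toLp 2 x
  have hcoef (i : ι) :
      inner 𝕜 (b i) (toEuclideanLin A X) = hA.eigenvalues i * inner 𝕜 (b i) X := by
    have hb : toEuclideanLin A (b i) = (hA.eigenvalues i : 𝕜) • b i := by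
      ext j
      simpa [b] using congrFun (hA.mulVec_eigenvectorBasis i) j
    rw [← isSymmetric_toEuclideanLin_iff.mpr hA, hb, inner_smul_left, RCLike.conj_ofReal]
  have hterm (i : ι) : RCLike.re (inner 𝕜 X (b i) * inner 𝕜 (b i) (toEuclideanLin A X)) =
      hA.eigenvalues i * ‖inner 𝕜 (b i) X‖ ^ 2 := by
    rw [hcoef, mul_left_comm, ← inner_conj_symm X, RCLike.conj_mul]
    norm_cast
  have hform : star x ⬝ᵥ A *ᵥ x = inner 𝕜 X (toEuclideanLin A X) := by
    rw [dotProduct_comm]; rfl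
  calc RCLike.re (star x ⬝ᵥ A *ᵥ x)
      = ∑ i, hA.eigenvalues i * ‖inner 𝕜 (b i) X‖ ^ 2 := by
        rw [hform, ← b.sum_inner_mul_inner, map_sum]
        exact Finset.sum_congr rfl fun i _ => hterm i
    _ ≤ ∑ i, (⨆ j, hA.eigenvalues j) * ‖inner 𝕜 (b i) X‖ ^ 2 := by
        gcongr with i
        exact le_ciSup (Set.finite_range _).bddAbove i
    _ = (⨆ i, hA.eigenvalues i) * ∑ i, ‖x i‖ ^ 2 := by
        rw [← Finset.mul_sum, b.sum_sq_norm_inner_right, EuclideanSpace.norm_sq_eq]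

end IsHermitian

end Matrix

theorem stmt_11_general {n : ℕ} (hn : 0 < n)
    (G : SimpleGraph (Fin n)) [DecidableRel G.Adj]
    (φ : Fin n → Fin n → ℂ)
    (hunit : ∀ i j, G.Adj i j → ‖φ i j‖ = 1)
    (L Q : Matrix (Fin n) (Fin n) ℂ)
    (hLdef : L = Matrix.diagonal (fun i => (G.degree i : ℂ)) -
      Matrix.of (fun i j => if G.Adj i j then φ i j else 0))
    (hQdef : Q = Matrix.diagonal (fun i => (G.degree i : ℂ)) + G.adjMatrix ℂ)
    (hL : L.IsHermitian) (hQ : Q.IsHermitian) :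
    (⨆ i, hL.eigenvalues i) ≤ ⨆ i, hQ.eigenvalues i := by
  have : Nonempty (Fin n) := ⟨⟨0, hn⟩⟩
  have hdiag (a : Fin n) : RCLike.re (L a a) ≤ RCLike.re (Q a a) := by
    simp [hLdef, hQdef]
  have hoff (a b : Fin n) (hab : a ≠ b) : ‖L a b‖ ≤ RCLike.re (Q a b) := by
    by_cases hadj : G.Adj a b <;> simp [hLdef, hQdef, hab, hadj, hunit]
  refine ciSup_le fun i => ?_
  set v : Fin n → ℂ := ⇑(hL.eigenvectorBasis i)
  have hv : ∑ j, ‖v j‖ ^ 2 = 1 := by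
    rw [← EuclideanSpace.norm_sq_eq, hL.eigenvectorBasis.orthonormal.1 i, one_pow]
  calc hL.eigenvalues i = RCLike.re (star v ⬝ᵥ L *ᵥ v) := hL.eigenvalues_eq i
    _ ≤ RCLike.re (star (fun j => (‖v j‖ : ℂ)) ⬝ᵥ Q *ᵥ fun j => (‖v j‖ : ℂ)) :=
        re_star_dotProduct_mulVec_le_of_norm_le hdiag hoff v
    _ ≤ (⨆ j, hQ.eigenvalues j) * ∑ j, ‖(‖v j‖ : ℂ)‖ ^ 2 :=
        hQ.re_star_dotProduct_mulVec_le_iSup_eigenvalues _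
    _ = ⨆ j, hQ.eigenvalues j := by simp [hv]

/-- For a connected complex unit gain graph `Φ = (Γ, φ)`, the largest Laplacian
eigenvalue is at most the largest eigenvalue of the signless Laplacian
`Q(Γ) = D(Γ) + A(Γ)` of the underlying graph. -/
theorem stmt_11 {n : ℕ} (hn : 0 < n)
    (G : SimpleGraph (Fin n)) [DecidableRel G.Adj] (hconn : G.Connected)
    (φ : Fin n → Fin n → ℂ)
    (hunit : ∀ i j, G.Adj i j → ‖φ i j‖ = 1)
    (hinv : ∀ i j, G.Adj i j → φ j i = (φ i j)⁻¹)
    (L Q : Matrix (Fin n) (Fin n) ℂ)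
    (hLdef : L = Matrix.diagonal (fun i => (G.degree i : ℂ)) -
      Matrix.of (fun i j => if G.Adj i j then φ i j else 0))
    (hQdef : Q = Matrix.diagonal (fun i => (G.degree i : ℂ)) + G.adjMatrix ℂ)
    (hL : L.IsHermitian) (hQ : Q.IsHermitian) :
    (⨆ i, hL.eigenvalues i) ≤ ⨆ i, hQ.eigenvalues i :=
  stmt_11_general hn G φ hunit L Q hLdef hQdef hL hQ
end

section
/- Let Γ be a connected simple graph and Φ = (Γ, φ) a complex unit gain graph. Then λ_1(L(Φ)) = λ_1(Q(Γ)) if and only if Φ is switching equivalent to (Γ, −1), i.e., if and only if the gain graph (Γ, −φ) is balanced. -/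
/-!
If `ζ` switches `Φ` to `(Γ, -1)`, then `L(Φ) = D Q(Γ) D*` with `D = diag ζ` unitary, so the two
matrices have the same characteristic polynomial. Conversely, `Q(Γ)` is the entrywise modulus of
`L(Φ)`, so for an eigenvector `x` of `λ₁(L)` with entrywise modulus `|x|`,
`λ₁(L) ‖x‖² = x* L x ≤ |x|* Q |x| ≤ λ₁(Q) ‖x‖²`. Equality makes `|x|` an eigenvector of `Q` for
`λ₁(Q)`, hence (Perron–Frobenius on the connected graph) nowhere zero, and forces
`conj(x_i) φ_ij x_j = -|x_i| |x_j|` on every edge; so `ζ_i = x_i / |x_i|` switches `Φ` to `(Γ, -1)`.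
-/

open Matrix Complex

open scoped ComplexOrder

namespace Matrix

variable {𝕜 ι : Type*} [RCLike 𝕜] [Fintype ι]

lemma star_dotProduct_mulVec_eq_sum (N : Matrix ι ι 𝕜) (x : ι → 𝕜) :
    star x ⬝ᵥ N *ᵥ x = ∑ i, ∑ j, star (x i) * N i j * x j := by
  simp [dotProduct, mulVec, Finset.mul_sum, mul_assoc]

lemma star_dotProduct_map_norm_mulVec (N : Matrix ι ι 𝕜) (x : ι → 𝕜) :
    star (fun i => (‖x i‖ : 𝕜)) ⬝ᵥ N.map (fun z => (‖z‖ : 𝕜)) *ᵥ (fun i => (‖x i‖ : 𝕜)) =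
      ∑ i, ∑ j, (‖star (x i) * N i j * x j‖ : 𝕜) := by
  simp [star_dotProduct_mulVec_eq_sum, norm_mul]

lemma re_dotProduct_mulVec_le_map_norm (N : Matrix ι ι 𝕜) (x : ι → 𝕜) :
    RCLike.re (star x ⬝ᵥ N *ᵥ x) ≤
      RCLike.re (star (fun i => (‖x i‖ : 𝕜)) ⬝ᵥ N.map (fun z => (‖z‖ : 𝕜)) *ᵥ
        (fun i => (‖x i‖ : 𝕜))) := by
  rw [star_dotProduct_map_norm_mulVec, star_dotProduct_mulVec_eq_sum]
  simp only [map_sum, RCLike.ofReal_re]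
  exact Finset.sum_le_sum fun i _ => Finset.sum_le_sum fun j _ => RCLike.re_le_norm _

lemma star_mul_mul_eq_norm_of_re_dotProduct_mulVec_eq {N : Matrix ι ι 𝕜} {x : ι → 𝕜}
    (h : RCLike.re (star x ⬝ᵥ N *ᵥ x) =
      RCLike.re (star (fun i => (‖x i‖ : 𝕜)) ⬝ᵥ N.map (fun z => (‖z‖ : 𝕜)) *ᵥ
        (fun i => (‖x i‖ : 𝕜))))
    (i j : ι) : star (x i) * N i j * x j = ‖star (x i) * N i j * x j‖ := by
  rw [star_dotProduct_map_norm_mulVec, star_dotProduct_mulVec_eq_sum] at h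
  simp only [map_sum, RCLike.ofReal_re] at h
  have hnonneg : ∀ i j, 0 ≤ ‖star (x i) * N i j * x j‖ - RCLike.re (star (x i) * N i j * x j) :=
    fun i j => sub_nonneg.mpr (RCLike.re_le_norm _)
  have hgap : ∑ i, ∑ j,
      (‖star (x i) * N i j * x j‖ - RCLike.re (star (x i) * N i j * x j)) = 0 := by
    simp only [Finset.sum_sub_distrib, h, sub_self]
  rw [Finset.sum_eq_zero_iff_of_nonneg fun i _ => Finset.sum_nonneg fun j _ => hnonneg i j]
    at hgap
  have hij := (Finset.sum_eq_zero_iff_of_nonneg fun j _ => hnonneg i j).mp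
    (hgap i (Finset.mem_univ i)) j (Finset.mem_univ j)
  exact RCLike.norm_le_re_iff_eq_norm.mp (sub_eq_zero.mp hij).le

namespace IsHermitian

variable [DecidableEq ι] {A : Matrix ι ι 𝕜}

lemma posSemidef_iSup_eigenvalues_smul_one_sub (hA : A.IsHermitian) :
    (((⨆ i, hA.eigenvalues i : ℝ) : 𝕜) • (1 : Matrix ι ι 𝕜) - A).PosSemidef := by
  set c := ⨆ i, hA.eigenvalues i
  have hdiag : (diagonal (RCLike.ofReal ∘ fun i => c - hA.eigenvalues i)).PosSemidef :=
    posSemidef_diagonal_iff.mpr fun i => (RCLike.ofReal_nonneg (K := 𝕜)).mpr <|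
      sub_nonneg.mpr <| le_ciSup (Set.finite_range _).bddAbove i
  have hsub : (c : 𝕜) • (1 : Matrix ι ι 𝕜) - A = Unitary.conjStarAlgAut 𝕜 _
      hA.eigenvectorUnitary (diagonal (RCLike.ofReal ∘ fun i => c - hA.eigenvalues i)) := by
    conv_lhs => enter [2]; rw [hA.spectral_theorem]
    rw [← map_one (Unitary.conjStarAlgAut 𝕜 _ hA.eigenvectorUnitary), ← map_smul, ← map_sub]
    congr 1
    ext i j
    by_cases h : i = j <;> simp [h, diagonal, RCLike.real_smul_eq_coe_mul]
  rw [hsub, Unitary.conjStarAlgAut_apply]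
  exact hdiag.mul_mul_conjTranspose_same _

lemma re_dotProduct_mulVec_le (hA : A.IsHermitian) (x : ι → 𝕜) :
    RCLike.re (star x ⬝ᵥ A *ᵥ x) ≤ (⨆ i, hA.eigenvalues i) * RCLike.re (star x ⬝ᵥ x) := by
  have := hA.posSemidef_iSup_eigenvalues_smul_one_sub.re_dotProduct_nonneg x
  simp only [sub_mulVec, smul_mulVec, one_mulVec, dotProduct_sub, dotProduct_smul, smul_eq_mul,
    map_sub, RCLike.re_ofReal_mul] at this
  linarith

lemma mulVec_eq_of_re_dotProduct_mulVec_eq (hA : A.IsHermitian) {x : ι → 𝕜}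
    (h : RCLike.re (star x ⬝ᵥ A *ᵥ x) = (⨆ i, hA.eigenvalues i) * RCLike.re (star x ⬝ᵥ x)) :
    A *ᵥ x = ((⨆ i, hA.eigenvalues i : ℝ) : 𝕜) • x := by
  have hP := hA.posSemidef_iSup_eigenvalues_smul_one_sub
  have hzero : star x ⬝ᵥ (((⨆ i, hA.eigenvalues i : ℝ) : 𝕜) • 1 - A) *ᵥ x = 0 := by
    refine RCLike.ext ?_ (by rw [map_zero]; exact (RCLike.nonneg_iff.mp
      (hP.dotProduct_mulVec_nonneg x)).2)
    simp only [sub_mulVec, smul_mulVec, one_mulVec, dotProduct_sub, dotProduct_smul, smul_eq_mul,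
      map_sub, RCLike.re_ofReal_mul, h, sub_self, map_zero]
  rw [hP.dotProduct_mulVec_zero_iff, sub_mulVec, smul_mulVec, one_mulVec, sub_eq_zero] at hzero
  exact hzero.symm

lemma exists_mulVec_eq_iSup_eigenvalues_smul [Nonempty ι] (hA : A.IsHermitian) :
    ∃ x : ι → 𝕜, x ≠ 0 ∧ A *ᵥ x = ((⨆ i, hA.eigenvalues i : ℝ) : 𝕜) • x := by
  obtain ⟨k, hk⟩ := exists_eq_ciSup_of_finite (f := hA.eigenvalues)
  refine ⟨⇑(hA.eigenvectorBasis k), fun h => ?_, ?_⟩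
  · exact hA.eigenvectorBasis.orthonormal.ne_zero k (by ext i; simpa using congrFun h i)
  · rw [hA.mulVec_eigenvectorBasis, ← hk, RCLike.real_smul_eq_coe_smul (K := 𝕜)]

end IsHermitian

end Matrix

theorem Complex.inv_div_norm_mul_mul_div_norm {a b u : ℂ} (ha : a ≠ 0) (hb : b ≠ 0)
    (h : star a * u * b = -(‖a‖ * ‖b‖)) : (a / ‖a‖)⁻¹ * u * (b / ‖b‖) = -1 := by
  have ha' : (‖a‖ : ℂ) ≠ 0 := by simpa using ha
  have hb' : (‖b‖ : ℂ) ≠ 0 := by simpa using hb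
  rw [RCLike.inv_eq_conj (by simp [ha]), map_div₀, Complex.conj_ofReal, ← Complex.star_def]
  field_simp
  exact h

namespace SimpleGraph

variable {V : Type*} [Fintype V]

theorem Preconnected.eq_zero_of_neighborFinset_sum_eq_zero {G : SimpleGraph V}
    [DecidableRel G.Adj] (hG : G.Preconnected) {w : V → ℝ} (hw : ∀ i, 0 ≤ w i)
    (hsum : ∀ i, w i = 0 → ∑ j ∈ G.neighborFinset i, w j = 0)
    {i : V} (hi : w i = 0) (j : V) : w j = 0 := by
  obtain ⟨p⟩ := hG i j
  induction p with
  | nil => exact hi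
  | cons hadj _ ih =>
    exact ih <| (Finset.sum_eq_zero_iff_of_nonneg fun k _ => hw k).mp (hsum _ hi) _
      ((mem_neighborFinset _ _ _).mpr hadj)

variable [DecidableEq V] (G : SimpleGraph V) [DecidableRel G.Adj]

def gainLapMatrix (φ : V → V → ℂ) : Matrix V V ℂ :=
  G.degMatrix ℂ - of fun i j => if G.Adj i j then φ i j else 0

def signlessLapMatrix (R : Type*) [AddMonoidWithOne R] : Matrix V V R :=
  G.degMatrix R + G.adjMatrix R

theorem signlessLapMatrix_mulVec_apply {R : Type*} [NonAssocSemiring R] (w : V → R) (i : V) :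
    (G.signlessLapMatrix R *ᵥ w) i = G.degree i * w i + ∑ j ∈ G.neighborFinset i, w j := by
  rw [signlessLapMatrix, add_mulVec, Pi.add_apply, degMatrix_mulVec_apply, adjMatrix_mulVec_apply]

theorem gainLapMatrix_apply_of_adj {φ : V → V → ℂ} {i j : V} (h : G.Adj i j) :
    G.gainLapMatrix φ i j = -φ i j := by
  simp [gainLapMatrix, degMatrix, h, G.ne_of_adj h]

theorem signlessLapMatrix_eq_map_norm_gainLapMatrix {φ : V → V → ℂ}
    (hφ : ∀ i j, G.Adj i j → ‖φ i j‖ = 1) :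
    G.signlessLapMatrix ℂ = (G.gainLapMatrix φ).map fun z => (‖z‖ : ℂ) := by
  ext i j
  by_cases hij : i = j
  · subst hij
    simp [signlessLapMatrix, gainLapMatrix, degMatrix]
  · by_cases hadj : G.Adj i j <;> simp [signlessLapMatrix, gainLapMatrix, degMatrix, hij, hadj, hφ]

theorem gainLapMatrix_eq_diagonal_mul_mul_star {φ : V → V → ℂ} {ζ : V → ℂ}
    (hζ : ∀ i, ‖ζ i‖ = 1) (hsw : ∀ i j, G.Adj i j → (ζ i)⁻¹ * φ i j * ζ j = -1) :
    G.gainLapMatrix φ = diagonal ζ * G.signlessLapMatrix ℂ * star (diagonal ζ) := by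
  have hconj : ∀ i, star (ζ i) = (ζ i)⁻¹ := fun i => (RCLike.inv_eq_conj (hζ i)).symm
  have hne : ∀ i, ζ i ≠ 0 := fun i h => by simpa [h] using hζ i
  ext i j
  rw [star_eq_conjTranspose, diagonal_conjTranspose, mul_diagonal, diagonal_mul, Pi.star_apply,
    hconj]
  by_cases hij : i = j
  · subst hij
    simp [signlessLapMatrix, gainLapMatrix, degMatrix, mul_right_comm _ _ (ζ i)⁻¹, hne]
  · by_cases hadj : G.Adj i j
    · have hφ : φ i j = -(ζ i * (ζ j)⁻¹) := by
        have := hsw i j hadj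
        field_simp [hne i, hne j] at this ⊢
        linear_combination this
      simp [signlessLapMatrix, gainLapMatrix, degMatrix, hij, hadj, hφ]
    · simp [signlessLapMatrix, gainLapMatrix, degMatrix, hij, hadj]

theorem iSup_eigenvalues_eq_of_switching {φ : V → V → ℂ} {ζ : V → ℂ}
    (hL : (G.gainLapMatrix φ).IsHermitian) (hQ : (G.signlessLapMatrix ℂ).IsHermitian)
    (hζ : ∀ i, ‖ζ i‖ = 1) (hsw : ∀ i j, G.Adj i j → (ζ i)⁻¹ * φ i j * ζ j = -1) :
    ⨆ i, hL.eigenvalues i = ⨆ i, hQ.eigenvalues i := by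
  have hD : star (diagonal ζ) * diagonal ζ = 1 := by
    rw [star_eq_conjTranspose, diagonal_conjTranspose, diagonal_mul_diagonal, ← diagonal_one]
    congr 1
    funext i
    rw [Pi.star_apply, RCLike.star_def, RCLike.conj_mul, hζ i]
    simp
  have hcharpoly : (G.gainLapMatrix φ).charpoly = (G.signlessLapMatrix ℂ).charpoly := by
    rw [G.gainLapMatrix_eq_diagonal_mul_mul_star hζ hsw, charpoly_mul_comm, ← mul_assoc, hD,
      one_mul]
  rw [(hL.eigenvalues_eq_eigenvalues_iff hQ).mpr hcharpoly]

theorem exists_switching_of_iSup_eigenvalues_eq (hG : G.Connected) {φ : V → V → ℂ}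
    (hφ : ∀ i j, G.Adj i j → ‖φ i j‖ = 1) (hL : (G.gainLapMatrix φ).IsHermitian)
    (hQ : (G.signlessLapMatrix ℂ).IsHermitian)
    (h : ⨆ i, hL.eigenvalues i = ⨆ i, hQ.eigenvalues i) :
    ∃ ζ : V → ℂ, (∀ i, ‖ζ i‖ = 1) ∧ ∀ i j, G.Adj i j → (ζ i)⁻¹ * φ i j * ζ j = -1 := by
  have : Nonempty V := hG.nonempty
  obtain ⟨x, hx0, hx⟩ := hL.exists_mulVec_eq_iSup_eigenvalues_smul
  set w : V → ℂ := fun i => (‖x i‖ : ℂ)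
  have hQL := G.signlessLapMatrix_eq_map_norm_gainLapMatrix hφ
  have hww : star w ⬝ᵥ w = star x ⬝ᵥ x := by
    simp [w, dotProduct, RCLike.star_def, RCLike.conj_mul, sq]
  have hxLx : RCLike.re (star x ⬝ᵥ G.gainLapMatrix φ *ᵥ x) =
      (⨆ i, hQ.eigenvalues i) * RCLike.re (star x ⬝ᵥ x) := by
    rw [hx, dotProduct_smul, smul_eq_mul, RCLike.re_ofReal_mul, h]
  have hLQ : RCLike.re (star x ⬝ᵥ G.gainLapMatrix φ *ᵥ x) ≤
      RCLike.re (star w ⬝ᵥ G.signlessLapMatrix ℂ *ᵥ w) :=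
    hQL ▸ re_dotProduct_mulVec_le_map_norm _ x
  have hwQw := hQ.re_dotProduct_mulVec_le w
  rw [hww] at hwQw
  have hphase := star_mul_mul_eq_norm_of_re_dotProduct_mulVec_eq
    (hQL ▸ le_antisymm hLQ (by linarith))
  have heig := hQ.mulVec_eq_of_re_dotProduct_mulVec_eq (x := w) (by rw [hww]; linarith)
  have hx_ne : ∀ i, x i ≠ 0 := by
    intro i hi
    refine hx0 (funext fun j => norm_eq_zero.mp ?_)
    refine hG.preconnected.eq_zero_of_neighborFinset_sum_eq_zero (w := fun i => ‖x i‖)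
      (fun _ => norm_nonneg _) (fun k hk => ?_) (norm_eq_zero.mpr hi) j
    have hk_eig := congrFun heig k
    rw [signlessLapMatrix_mulVec_apply, Pi.smul_apply] at hk_eig
    simp only [w, hk, Complex.ofReal_zero, mul_zero, smul_zero, zero_add] at hk_eig
    exact_mod_cast hk_eig
  refine ⟨fun i => x i / ‖x i‖, fun i => by simp [hx_ne i], fun i j hij => ?_⟩
  refine Complex.inv_div_norm_mul_mul_div_norm (hx_ne i) (hx_ne j) ?_
  have hij_phase := hphase i j
  rw [G.gainLapMatrix_apply_of_adj hij, norm_mul, norm_mul, norm_neg, hφ i j hij, norm_star]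
    at hij_phase
  push_cast at hij_phase
  linear_combination -hij_phase

end SimpleGraph

theorem stmt_12_general {n : ℕ}
    (G : SimpleGraph (Fin n)) [DecidableRel G.Adj] (hconn : G.Connected)
    (φ : Fin n → Fin n → ℂ)
    (hunit : ∀ i j, G.Adj i j → ‖φ i j‖ = 1)
    (L Q : Matrix (Fin n) (Fin n) ℂ)
    (hLdef : L = Matrix.diagonal (fun i => (G.degree i : ℂ)) -
      Matrix.of (fun i j => if G.Adj i j then φ i j else 0))
    (hQdef : Q = Matrix.diagonal (fun i => (G.degree i : ℂ)) + G.adjMatrix ℂ)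
    (hL : L.IsHermitian) (hQ : Q.IsHermitian) :
    (⨆ i, hL.eigenvalues i) = (⨆ i, hQ.eigenvalues i) ↔
      ∃ ζ : Fin n → ℂ, (∀ i, ‖ζ i‖ = 1) ∧
        ∀ i j, G.Adj i j → (ζ i)⁻¹ * φ i j * ζ j = -1 := by
  subst hLdef hQdef
  exact ⟨G.exists_switching_of_iSup_eigenvalues_eq hconn hunit hL hQ,
    fun ⟨_, hζ, hsw⟩ => G.iSup_eigenvalues_eq_of_switching hL hQ hζ hsw⟩

/-- For a connected complex unit gain graph, `λ₁(L(Φ)) = λ₁(Q(Γ))` holds if and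
only if `Φ` is switching equivalent to `(Γ, −1)`, i.e. there is `ζ : V → T` with
`(ζ i)⁻¹ φ(e_ij) ζ j = −1` on every edge. -/
theorem stmt_12 {n : ℕ} (hn : 0 < n)
    (G : SimpleGraph (Fin n)) [DecidableRel G.Adj] (hconn : G.Connected)
    (φ : Fin n → Fin n → ℂ)
    (hunit : ∀ i j, G.Adj i j → ‖φ i j‖ = 1)
    (hinv : ∀ i j, G.Adj i j → φ j i = (φ i j)⁻¹)
    (L Q : Matrix (Fin n) (Fin n) ℂ)
    (hLdef : L = Matrix.diagonal (fun i => (G.degree i : ℂ)) -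
      Matrix.of (fun i j => if G.Adj i j then φ i j else 0))
    (hQdef : Q = Matrix.diagonal (fun i => (G.degree i : ℂ)) + G.adjMatrix ℂ)
    (hL : L.IsHermitian) (hQ : Q.IsHermitian) :
    (⨆ i, hL.eigenvalues i) = (⨆ i, hQ.eigenvalues i) ↔
      ∃ ζ : Fin n → ℂ, (∀ i, ‖ζ i‖ = 1) ∧
        ∀ i j, G.Adj i j → (ζ i)⁻¹ * φ i j * ζ j = -1 :=
  stmt_12_general G hconn φ hunit L Q hLdef hQdef hL hQ
end

section
/- Let T₂ be the tree on N ≥ 4 vertices consisting of a center vertex c adjacent to N−3 leaves and to a vertex u, with u adjacent to a pendant vertex w (so w is at distance 2 from the center). Then the characteristic polynomial of L(T₂) is λ(λ−1)^{N−4}(λ³ − (N+2)λ² − (2−3N)λ − N), and λ_1(L(T₂)) > Δ + 1, where Δ = N − 2 is the maximum degree. -/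
open Matrix Polynomial

/-- The broom tree `T₂` on `N` vertices: the center `0` is adjacent to the
vertices `1, …, N−2` of which `1, …, N−3` are leaves, and the vertex `N−2` is
further adjacent to the pendant vertex `N−1` (so `0` has degree `N−2`). -/
def broomGraph (N : ℕ) : SimpleGraph (Fin N) where
  Adj i j := i ≠ j ∧
    (((i : ℕ) = 0 ∧ (j : ℕ) < N - 1) ∨ ((j : ℕ) = 0 ∧ (i : ℕ) < N - 1) ∨
      ((i : ℕ) = N - 2 ∧ (j : ℕ) = N - 1) ∨ ((j : ℕ) = N - 2 ∧ (i : ℕ) = N - 1))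
  symm := by constructor; intro i j h; exact ⟨h.1.symm, by tauto⟩
  loopless := by constructor; intro i h; exact h.1 rfl

instance (N : ℕ) : DecidableRel (broomGraph N).Adj := fun i j =>
  inferInstanceAs (Decidable (_ ∧ _))

lemma broom_adj {N : ℕ} (i j : Fin N) : (broomGraph N).Adj i j ↔ ((i : ℕ) ≠ (j : ℕ) ∧
    (((i : ℕ) = 0 ∧ (j : ℕ) < N - 1) ∨ ((j : ℕ) = 0 ∧ (i : ℕ) < N - 1) ∨
      ((i : ℕ) = N - 2 ∧ (j : ℕ) = N - 1) ∨ ((j : ℕ) = N - 2 ∧ (i : ℕ) = N - 1))) := by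
  simp [broomGraph, Fin.val_inj, ne_eq]

noncomputable def e0f (N : ℕ) (i : Fin N) : RatFunc ℝ := if (i : ℕ) = 0 then 1 else 0
noncomputable def chif (N : ℕ) (i : Fin N) : RatFunc ℝ :=
  if (i : ℕ) ≠ 0 ∧ (i : ℕ) < N - 1 then 1 else 0
noncomputable def euf (N : ℕ) (i : Fin N) : RatFunc ℝ := if (i : ℕ) = N - 2 then 1 else 0
noncomputable def ewf (N : ℕ) (i : Fin N) : RatFunc ℝ := if (i : ℕ) = N - 1 then 1 else 0

noncomputable def Umat (N : ℕ) : Matrix (Fin N) (Fin 4) (RatFunc ℝ) :=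
  Matrix.of fun i k => ![e0f N i, chif N i, euf N i, ewf N i] k
noncomputable def Vmat (N : ℕ) : Matrix (Fin 4) (Fin N) (RatFunc ℝ) :=
  Matrix.of fun k j => ![chif N j, e0f N j, ewf N j, euf N j] k

set_option maxHeartbeats 3000000 in
lemma UV_eq {N : ℕ} (hN : 4 ≤ N) :
    Umat N * Vmat N = (broomGraph N).adjMatrix (RatFunc ℝ) := by
  ext i j
  have hi := i.isLt
  have hj := j.isLt
  rw [Matrix.mul_apply, Fin.sum_univ_four]
  rw [SimpleGraph.adjMatrix_apply]
  simp only [Umat, Vmat, Matrix.of_apply, Matrix.cons_val_zero, Matrix.cons_val_one,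
    Matrix.head_cons, Matrix.cons_val_two, Matrix.tail_cons, Matrix.cons_val_three,
    e0f, chif, euf, ewf, broom_adj]
  split_ifs <;> first | (exfalso; omega) | norm_num

lemma broom_degree {N : ℕ} (hN : 4 ≤ N) (i : Fin N) :
    (broomGraph N).degree i =
      if (i : ℕ) = 0 then N - 2 else if (i : ℕ) = N - 2 then 2 else 1 := by
  have hi := i.isLt
  rw [SimpleGraph.degree]
  by_cases h0 : (i : ℕ) = 0
  · have : (broomGraph N).neighborFinset i = Finset.Ioo ⟨0, by omega⟩ ⟨N-1, by omega⟩ := by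
      ext j
      simp only [SimpleGraph.mem_neighborFinset, broom_adj, Finset.mem_Ioo, Fin.lt_def]
      omega
    rw [this, Fin.card_Ioo]
    simp only [h0, if_pos rfl, if_true]
    omega
  · by_cases h2 : (i : ℕ) = N - 2
    · have : (broomGraph N).neighborFinset i = {⟨0, by omega⟩, ⟨N-1, by omega⟩} := by
        ext j
        simp only [SimpleGraph.mem_neighborFinset, broom_adj, Finset.mem_insert,
          Finset.mem_singleton, ← Fin.val_inj]
        omega
      rw [this]
      rw [Finset.card_insert_of_notMem (by simp [← Fin.val_inj]; omega), Finset.card_singleton]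
      simp only [h0, h2, if_false, if_pos rfl]
      split_ifs <;> omega
    · by_cases h1 : (i : ℕ) = N - 1
      · have : (broomGraph N).neighborFinset i = {⟨N-2, by omega⟩} := by
          ext j
          simp only [SimpleGraph.mem_neighborFinset, broom_adj, Finset.mem_singleton,
            ← Fin.val_inj]
          omega
        rw [this]
        simp [h0, h2]
      · have : (broomGraph N).neighborFinset i = {⟨0, by omega⟩} := by
          ext j
          simp only [SimpleGraph.mem_neighborFinset, broom_adj, Finset.mem_singleton,
            ← Fin.val_inj]
          omega
        rw [this]
        simp [h0, h2]

lemma broom_maxDegree {N : ℕ} (hN : 4 ≤ N) : (broomGraph N).maxDegree = N - 2 := by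
  have h0 : (broomGraph N).degree ⟨0, by omega⟩ = N - 2 := by rw [broom_degree hN]; simp
  apply le_antisymm
  · apply SimpleGraph.maxDegree_le_of_forall_degree_le
    intro v
    rw [broom_degree hN]
    split_ifs <;> omega
  · rw [← h0]
    exact SimpleGraph.degree_le_maxDegree _ _

noncomputable def dfun (N : ℕ) (i : Fin N) : RatFunc ℝ :=
  RatFunc.X - ((broomGraph N).degree i : RatFunc ℝ)

lemma dfun_zero {N : ℕ} (hN : 4 ≤ N) (i : Fin N) (h : (i : ℕ) = 0) :
    dfun N i = RatFunc.X - ((N : RatFunc ℝ) - 2) := by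
  rw [dfun, broom_degree hN, if_pos h, Nat.cast_sub (by omega)]
  norm_num

lemma dfun_u {N : ℕ} (hN : 4 ≤ N) (i : Fin N) (h : (i : ℕ) = N - 2) :
    dfun N i = RatFunc.X - 2 := by
  rw [dfun, broom_degree hN, if_neg (by omega), if_pos h]
  norm_num

lemma dfun_leaf {N : ℕ} (hN : 4 ≤ N) (i : Fin N) (h0 : (i : ℕ) ≠ 0) (h2 : (i : ℕ) ≠ N - 2) :
    dfun N i = RatFunc.X - 1 := by
  rw [dfun, broom_degree hN, if_neg h0, if_neg h2]
  norm_num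

lemma X_sub_C_ne {r : ℝ} : RatFunc.X - algebraMap ℝ (RatFunc ℝ) r ≠ 0 := by
  have : RatFunc.X - algebraMap ℝ (RatFunc ℝ) r
      = algebraMap ℝ[X] (RatFunc ℝ) (X - C r) := by
    rw [map_sub, RatFunc.algebraMap_X, RatFunc.algebraMap_C, RatFunc.algebraMap_eq_C]
  rw [this]
  exact RatFunc.algebraMap_ne_zero (Polynomial.X_sub_C_ne_zero r)

lemma X_sub_one_ne : (RatFunc.X : RatFunc ℝ) - 1 ≠ 0 := by
  have := X_sub_C_ne (r := 1); rwa [_root_.map_one] at this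

lemma X_sub_two_ne : (RatFunc.X : RatFunc ℝ) - 2 ≠ 0 := by
  have := X_sub_C_ne (r := 2); rwa [map_ofNat] at this

lemma X_sub_n_ne {N : ℕ} : (RatFunc.X : RatFunc ℝ) - ((N : RatFunc ℝ) - 2) ≠ 0 := by
  have := X_sub_C_ne (r := (N : ℝ) - 2)
  rwa [map_sub, map_natCast, map_ofNat] at this

lemma dfun_ne {N : ℕ} (hN : 4 ≤ N) (i : Fin N) : dfun N i ≠ 0 := by
  by_cases h0 : (i : ℕ) = 0
  · rw [dfun_zero hN i h0]; exact X_sub_n_ne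
  · by_cases h2 : (i : ℕ) = N - 2
    · rw [dfun_u hN i h2]; exact X_sub_two_ne
    · rw [dfun_leaf hN i h0 h2]; exact X_sub_one_ne

lemma sum_ite_val {β : Type*} [AddCommMonoid β] {N c : ℕ} (hc : c < N) (g : Fin N → β) :
    (∑ i : Fin N, if (i : ℕ) = c then g i else 0) = g ⟨c, hc⟩ := by
  rw [Fintype.sum_eq_single (⟨c, hc⟩ : Fin N)]
  · simp
  · intro i hi
    exact if_neg (fun h => hi (Fin.ext h))

lemma sum_zero_of_disjoint {N : ℕ} (f g : Fin N → RatFunc ℝ) (h : ∀ i, f i * g i = 0) :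
    ∑ i, f i * ((dfun N i)⁻¹ * g i) = 0 := by
  apply Finset.sum_eq_zero
  intro i _
  rw [mul_left_comm, h i, mul_zero]

lemma sum_ind {N c : ℕ} (hc : c < N) (g : Fin N → RatFunc ℝ) :
    (∑ i : Fin N, (if (i : ℕ) = c then (1 : RatFunc ℝ) else 0) * g i) = g ⟨c, hc⟩ := by
  rw [← sum_ite_val hc g]
  exact Finset.sum_congr rfl fun i _ => by split_ifs <;> simp

lemma chif_u {N : ℕ} (hN : 4 ≤ N) (i : Fin N) (h : (i : ℕ) = N - 2) : chif N i = 1 := by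
  rw [chif, if_pos ⟨by omega, by omega⟩]

lemma sum_S {N : ℕ} (hN : 4 ≤ N) :
    (∑ i : Fin N, chif N i * ((dfun N i)⁻¹ * chif N i)) =
      ((N : RatFunc ℝ) - 3) * (RatFunc.X - 1)⁻¹ + (RatFunc.X - 2)⁻¹ := by
  have hsummand : ∀ i : Fin N, chif N i * ((dfun N i)⁻¹ * chif N i) =
      (if (i : ℕ) ≠ 0 ∧ (i : ℕ) < N - 1 ∧ (i : ℕ) ≠ N - 2 then (RatFunc.X - 1)⁻¹ else 0) +
      (if (i : ℕ) = N - 2 then (RatFunc.X - 2)⁻¹ else 0) := by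
    intro i
    by_cases h0 : (i : ℕ) ≠ 0 ∧ (i : ℕ) < N - 1
    · rw [chif, if_pos h0]
      by_cases h2 : (i : ℕ) = N - 2
      · rw [dfun_u hN i h2, if_neg (by tauto), if_pos h2]
        ring
      · rw [dfun_leaf hN i h0.1 h2, if_pos ⟨h0.1, h0.2, h2⟩, if_neg h2]
        ring
    · rw [chif, if_neg h0, if_neg (by tauto), if_neg (by omega)]
      simp
  rw [Finset.sum_congr rfl fun i _ => hsummand i, Finset.sum_add_distrib]
  congr 1
  · rw [← Finset.sum_filter, Finset.sum_const]
    have hfil : Finset.univ.filter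
          (fun i : Fin N => (i : ℕ) ≠ 0 ∧ (i : ℕ) < N - 1 ∧ (i : ℕ) ≠ N - 2) =
        Finset.Ioo ⟨0, by omega⟩ ⟨N - 2, by omega⟩ := by
      ext j
      simp only [Finset.mem_filter, Finset.mem_univ, true_and, Finset.mem_Ioo, Fin.lt_def]
      omega
    rw [hfil, Fin.card_Ioo, nsmul_eq_mul]
    congr 1
    rw [show N - 2 - 0 - 1 = N - 3 by omega, Nat.cast_sub (by omega)]
    norm_num
  · rw [sum_ite_val (show N - 2 < N by omega)]


lemma lw_ind {N c : ℕ} (hc : c < N) (g : Fin N → RatFunc ℝ) :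
    (∑ i : Fin N, (if (i : ℕ) = c then (1 : RatFunc ℝ) else 0) * ((dfun N i)⁻¹ * g i)) =
      (dfun N ⟨c, hc⟩)⁻¹ * g ⟨c, hc⟩ :=
  sum_ind hc _

lemma lw10 {N : ℕ} (hN : 4 ≤ N) :
    (∑ i : Fin N, e0f N i * ((dfun N i)⁻¹ * e0f N i)) =
      (RatFunc.X - ((N : RatFunc ℝ) - 2))⁻¹ := by
  simp only [e0f]
  rw [lw_ind (show 0 < N by omega)]
  rw [show dfun N ⟨0, by omega⟩ = RatFunc.X - ((N : RatFunc ℝ) - 2) from dfun_zero hN _ rfl]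
  simp

lemma lw23 {N : ℕ} (hN : 4 ≤ N) :
    (∑ i : Fin N, ewf N i * ((dfun N i)⁻¹ * ewf N i)) = (RatFunc.X - 1)⁻¹ := by
  simp only [ewf]
  rw [lw_ind (show N - 1 < N by omega)]
  rw [show dfun N ⟨N - 1, by omega⟩ = RatFunc.X - 1 from
    dfun_leaf hN _ (by simp; omega) (by simp; omega)]
  simp

lemma lw31 {N : ℕ} (hN : 4 ≤ N) :
    (∑ i : Fin N, euf N i * ((dfun N i)⁻¹ * chif N i)) = (RatFunc.X - 2)⁻¹ := by
  simp only [euf]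
  rw [lw_ind (show N - 2 < N by omega)]
  rw [show dfun N ⟨N - 2, by omega⟩ = RatFunc.X - 2 from dfun_u hN _ rfl,
    chif_u hN _ rfl, mul_one]

lemma lw32 {N : ℕ} (hN : 4 ≤ N) :
    (∑ i : Fin N, euf N i * ((dfun N i)⁻¹ * euf N i)) = (RatFunc.X - 2)⁻¹ := by
  simp only [euf]
  rw [lw_ind (show N - 2 < N by omega)]
  rw [show dfun N ⟨N - 2, by omega⟩ = RatFunc.X - 2 from dfun_u hN _ rfl]
  simp

lemma lw02 {N : ℕ} (hN : 4 ≤ N) :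
    (∑ i : Fin N, chif N i * ((dfun N i)⁻¹ * euf N i)) = (RatFunc.X - 2)⁻¹ := by
  rw [Finset.sum_congr rfl (fun i _ => show chif N i * ((dfun N i)⁻¹ * euf N i)
    = euf N i * ((dfun N i)⁻¹ * chif N i) by ring)]
  exact lw31 hN

lemma oneW {N : ℕ} (hN : 4 ≤ N) :
    (1 : Matrix (Fin 4) (Fin 4) (RatFunc ℝ)) +
        Vmat N * (Matrix.diagonal (fun i => (dfun N i)⁻¹) * Umat N) =
      !![1, ((N : RatFunc ℝ) - 3) * (RatFunc.X - 1)⁻¹ + (RatFunc.X - 2)⁻¹,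
            (RatFunc.X - 2)⁻¹, 0;
         (RatFunc.X - ((N : RatFunc ℝ) - 2))⁻¹, 1, 0, 0;
         0, 0, 1, (RatFunc.X - 1)⁻¹;
         0, (RatFunc.X - 2)⁻¹, (RatFunc.X - 2)⁻¹, 1] := by
  have hz : ∀ (f g : Fin N → RatFunc ℝ), (∀ i : Fin N, f i * g i = 0) →
      (∑ i : Fin N, f i * ((dfun N i)⁻¹ * g i)) = 0 := fun f g h =>
    sum_zero_of_disjoint f g h
  have hz1 : (∑ i : Fin N, chif N i * ((dfun N i)⁻¹ * e0f N i)) = 0 :=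
    hz _ _ fun i => by rw [chif, e0f]; split_ifs <;> first | (exfalso; omega) | ring
  have hz2 : (∑ i : Fin N, chif N i * ((dfun N i)⁻¹ * ewf N i)) = 0 :=
    hz _ _ fun i => by rw [chif, ewf]; split_ifs <;> first | (exfalso; omega) | ring
  have hz3 : (∑ i : Fin N, e0f N i * ((dfun N i)⁻¹ * chif N i)) = 0 :=
    hz _ _ fun i => by rw [chif, e0f]; split_ifs <;> first | (exfalso; omega) | ring
  have hz4 : (∑ i : Fin N, e0f N i * ((dfun N i)⁻¹ * euf N i)) = 0 :=
    hz _ _ fun i => by rw [euf, e0f]; split_ifs <;> first | (exfalso; omega) | ring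
  have hz5 : (∑ i : Fin N, e0f N i * ((dfun N i)⁻¹ * ewf N i)) = 0 :=
    hz _ _ fun i => by rw [ewf, e0f]; split_ifs <;> first | (exfalso; omega) | ring
  have hz6 : (∑ i : Fin N, ewf N i * ((dfun N i)⁻¹ * e0f N i)) = 0 :=
    hz _ _ fun i => by rw [ewf, e0f]; split_ifs <;> first | (exfalso; omega) | ring
  have hz7 : (∑ i : Fin N, ewf N i * ((dfun N i)⁻¹ * chif N i)) = 0 :=
    hz _ _ fun i => by rw [ewf, chif]; split_ifs <;> first | (exfalso; omega) | ring
  have hz8 : (∑ i : Fin N, ewf N i * ((dfun N i)⁻¹ * euf N i)) = 0 :=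
    hz _ _ fun i => by rw [ewf, euf]; split_ifs <;> first | (exfalso; omega) | ring
  have hz9 : (∑ i : Fin N, euf N i * ((dfun N i)⁻¹ * e0f N i)) = 0 :=
    hz _ _ fun i => by rw [euf, e0f]; split_ifs <;> first | (exfalso; omega) | ring
  have hz10 : (∑ i : Fin N, euf N i * ((dfun N i)⁻¹ * ewf N i)) = 0 :=
    hz _ _ fun i => by rw [euf, ewf]; split_ifs <;> first | (exfalso; omega) | ring
  have hmul : ∀ (a b : Fin 4),
      (Vmat N * (Matrix.diagonal (fun i => (dfun N i)⁻¹) * Umat N)) a b =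
        ∑ i, Vmat N a i * ((dfun N i)⁻¹ * Umat N i b) := by
    intro a b
    rw [Matrix.mul_apply]
    exact Finset.sum_congr rfl fun i _ => by rw [Matrix.diagonal_mul]
  ext a b
  rw [Matrix.add_apply, hmul]
  fin_cases a <;> fin_cases b <;>
    simp [Umat, Vmat, hz1, hz2, hz3, hz4, hz5, hz6, hz7, hz8, hz9, hz10,
      lw10 hN, lw23 hN, lw31 hN, lw32 hN, lw02 hN, sum_S hN, Matrix.one_apply,
      Matrix.vecHead, Matrix.vecTail]

lemma det4 (a b c S : RatFunc ℝ) :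
    Matrix.det !![1, S, b, 0; a, 1, 0, 0; 0, 0, 1, c; 0, b, b, 1] =
      (1 - b * c) * (1 - a * S) - a * b ^ 2 * c := by
  simp [Matrix.det_succ_row_zero, Fin.sum_univ_succ, Matrix.vecHead,
    Matrix.vecTail, Fin.lt_def]
  simp [Fin.succAbove, Fin.lt_def]
  ring

lemma key_ident (n x : RatFunc ℝ) (h1 : x - 1 ≠ 0) (h2 : x - 2 ≠ 0)
    (hn : x - (n - 2) ≠ 0) :
    (x - (n - 2)) * (x - 2) * (x - 1) ^ 2 *
      ((1 - (x - 2)⁻¹ * (x - 1)⁻¹) *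
          (1 - (x - (n - 2))⁻¹ * ((n - 3) * (x - 1)⁻¹ + (x - 2)⁻¹)) -
        (x - (n - 2))⁻¹ * ((x - 2)⁻¹) ^ 2 * (x - 1)⁻¹) =
      x * (x ^ 3 - (n + 2) * x ^ 2 - (2 - 3 * n) * x - n) := by
  have det4eq : ((1 - (x - 2)⁻¹ * (x - 1)⁻¹) *
          (1 - (x - (n - 2))⁻¹ * ((n - 3) * (x - 1)⁻¹ + (x - 2)⁻¹)) -
        (x - (n - 2))⁻¹ * ((x - 2)⁻¹) ^ 2 * (x - 1)⁻¹)
      = 1 - (n - 3) * (x - (n - 2))⁻¹ * (x - 1)⁻¹ - (x - (n - 2))⁻¹ * (x - 2)⁻¹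
        - (x - 2)⁻¹ * (x - 1)⁻¹ + (n - 3) * (x - (n - 2))⁻¹ * (x - 2)⁻¹ * ((x - 1)⁻¹) ^ 2 := by
    ring
  rw [det4eq]
  have hu : (x - (n - 2)) * (x - (n - 2))⁻¹ = 1 := mul_inv_cancel₀ hn
  have hv : (x - 2) * (x - 2)⁻¹ = 1 := mul_inv_cancel₀ h2
  have hw : (x - 1) * (x - 1)⁻¹ = 1 := mul_inv_cancel₀ h1
  have expand : (x - (n - 2)) * (x - 2) * (x - 1) ^ 2 *
      (1 - (n - 3) * (x - (n - 2))⁻¹ * (x - 1)⁻¹ - (x - (n - 2))⁻¹ * (x - 2)⁻¹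
        - (x - 2)⁻¹ * (x - 1)⁻¹ + (n - 3) * (x - (n - 2))⁻¹ * (x - 2)⁻¹ * ((x - 1)⁻¹) ^ 2)
      = (x - (n - 2)) * (x - 2) * (x - 1) ^ 2 - (n - 3) * ((x - 2) * (x - 1))
        - (x - 1) ^ 2 - (x - (n - 2)) * (x - 1) + (n - 3) := by
    linear_combination
      (-(n - 3) * ((x - 2) * (x - 1) * ((x - 1) * (x - 1)⁻¹)) -
        (x - 1) ^ 2 * (x - 2) * (x - 2)⁻¹ +
        (n - 3) * (x - 2) * (x - 2)⁻¹ * (x - 1) ^ 2 * ((x - 1)⁻¹) ^ 2) * hu +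
      (-(x - 1) ^ 2 - (x - (n - 2)) * (x - 1) * ((x - 1) * (x - 1)⁻¹) +
        (n - 3) * (x - 1) ^ 2 * ((x - 1)⁻¹) ^ 2) * hv +
      (-(n - 3) * ((x - 2) * (x - 1)) - (x - (n - 2)) * (x - 1) +
        (n - 3) * ((x - 1) * (x - 1)⁻¹ + 1)) * hw
  rw [expand]
  ring

lemma broom_charmatrix_map {N : ℕ} (hN : 4 ≤ N) (L : Matrix (Fin N) (Fin N) ℝ)
    (hLdef : L = Matrix.diagonal (fun i => ((broomGraph N).degree i : ℝ)) -
      (broomGraph N).adjMatrix ℝ) :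
    (charmatrix L).map (algebraMap ℝ[X] (RatFunc ℝ)) =
      Matrix.diagonal (dfun N) + Umat N * Vmat N := by
  rw [UV_eq hN]
  ext i j
  by_cases h : i = j
  · subst h
    rw [Matrix.map_apply, charmatrix_apply_eq, Matrix.add_apply, Matrix.diagonal_apply_eq,
      SimpleGraph.adjMatrix_apply, if_neg (SimpleGraph.irrefl _), add_zero, hLdef,
      Matrix.sub_apply, Matrix.diagonal_apply_eq, SimpleGraph.adjMatrix_apply,
      if_neg (SimpleGraph.irrefl _), sub_zero, dfun]
    rw [map_sub, RatFunc.algebraMap_X, RatFunc.algebraMap_C]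
    exact congrArg (fun t => RatFunc.X - t) (map_natCast RatFunc.C _)
  · rw [Matrix.map_apply, charmatrix_apply_ne _ _ _ h, Matrix.add_apply,
      Matrix.diagonal_apply_ne _ h, zero_add, hLdef, Matrix.sub_apply,
      Matrix.diagonal_apply_ne _ h, zero_sub]
    simp only [SimpleGraph.adjMatrix_apply]
    split_ifs <;> simp

lemma broom_prod_dfun {N : ℕ} (hN : 4 ≤ N) :
    (∏ i : Fin N, dfun N i) =
      (RatFunc.X - ((N : RatFunc ℝ) - 2)) * (RatFunc.X - 2) * (RatFunc.X - 1) ^ (N - 2) := by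
  rw [← Finset.prod_filter_mul_prod_filter_not Finset.univ
    (fun i : Fin N => (i : ℕ) = 0 ∨ (i : ℕ) = N - 2)]
  have h1 : Finset.univ.filter (fun i : Fin N => (i : ℕ) = 0 ∨ (i : ℕ) = N - 2) =
      {⟨0, by omega⟩, ⟨N - 2, by omega⟩} := by
    ext j
    simp only [Finset.mem_filter, Finset.mem_univ, true_and, Finset.mem_insert,
      Finset.mem_singleton, ← Fin.val_inj] <;> omega
  have hcard2 : ({⟨0, by omega⟩, ⟨N - 2, by omega⟩} : Finset (Fin N)).card = 2 := by
    rw [Finset.card_insert_of_notMem (by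
      simp only [Finset.mem_singleton, ← Fin.val_inj]; omega), Finset.card_singleton]
  have hcard : (Finset.univ.filter
      (fun i : Fin N => ¬((i : ℕ) = 0 ∨ (i : ℕ) = N - 2))).card = N - 2 := by
    have := Finset.card_filter_add_card_filter_not (s := Finset.univ)
      (p := fun i : Fin N => (i : ℕ) = 0 ∨ (i : ℕ) = N - 2)
    rw [h1, hcard2, Finset.card_univ, Fintype.card_fin] at this
    omega
  rw [h1, Finset.prod_insert (by
      simp only [Finset.mem_singleton, ← Fin.val_inj]; omega), Finset.prod_singleton,
    dfun_zero hN _ rfl, dfun_u hN _ rfl]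
  rw [Finset.prod_congr rfl (fun i hi => dfun_leaf hN i
    (by simp only [Finset.mem_filter] at hi; tauto) (by simp only [Finset.mem_filter] at hi; tauto)),
    Finset.prod_const, hcard]

lemma broom_charpoly {N : ℕ} (hN : 4 ≤ N) (L : Matrix (Fin N) (Fin N) ℝ)
    (hLdef : L = Matrix.diagonal (fun i => ((broomGraph N).degree i : ℝ)) -
      (broomGraph N).adjMatrix ℝ) :
    L.charpoly = X * (X - 1) ^ (N - 4) *
      (X ^ 3 - C ((N : ℝ) + 2) * X ^ 2 - C (2 - 3 * (N : ℝ)) * X - C (N : ℝ)) := by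
  apply RatFunc.algebraMap_injective ℝ
  rw [Matrix.charpoly, RingHom.map_det, RingHom.mapMatrix_apply,
    broom_charmatrix_map hN L hLdef]
  have hDinv : Matrix.diagonal (dfun N) * Matrix.diagonal (fun i => (dfun N i)⁻¹) = 1 := by
    rw [Matrix.diagonal_mul_diagonal]
    have : (fun i => dfun N i * (dfun N i)⁻¹) = fun _ : Fin N => (1 : RatFunc ℝ) :=
      funext fun i => mul_inv_cancel₀ (dfun_ne hN i)
    rw [this, Matrix.diagonal_one]
  have hfact : Matrix.diagonal (dfun N) + Umat N * Vmat N =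
      Matrix.diagonal (dfun N) *
        (1 + (Matrix.diagonal (fun i => (dfun N i)⁻¹) * Umat N) * Vmat N) := by
    rw [Matrix.mul_add, Matrix.mul_one]
    congr 1
    rw [← Matrix.mul_assoc, ← Matrix.mul_assoc, hDinv, Matrix.one_mul]
  rw [hfact, Matrix.det_mul, Matrix.det_one_add_mul_comm, Matrix.det_diagonal,
    broom_prod_dfun hN, oneW hN, det4]
  have hk := key_ident (N : RatFunc ℝ) RatFunc.X X_sub_one_ne X_sub_two_ne X_sub_n_ne
  have hNm : N - 2 = (N - 4) + 2 := by omega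
  rw [hNm, pow_add]
  have hrhs : algebraMap ℝ[X] (RatFunc ℝ) (X * (X - 1) ^ (N - 4) *
      (X ^ 3 - C ((N : ℝ) + 2) * X ^ 2 - C (2 - 3 * (N : ℝ)) * X - C (N : ℝ))) =
      RatFunc.X * (RatFunc.X - 1) ^ (N - 4) *
        (RatFunc.X ^ 3 - ((N : RatFunc ℝ) + 2) * RatFunc.X ^ 2 -
          (2 - 3 * (N : RatFunc ℝ)) * RatFunc.X - (N : RatFunc ℝ)) := by
    simp only [_root_.map_mul, map_pow, map_sub, map_add, RatFunc.algebraMap_X,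
      RatFunc.algebraMap_C, map_natCast, map_ofNat, _root_.map_one]
  rw [hrhs]
  linear_combination ((RatFunc.X : RatFunc ℝ) - 1) ^ (N - 4) * hk

lemma conj_charpoly {n : ℕ} (U D A : Matrix (Fin n) (Fin n) ℝ) (h1 : U * star U = 1)
    (hA : A = U * D * star U) : A.charpoly = D.charpoly := by
  have h2 : star U * U = 1 := mul_eq_one_comm.mp h1
  have hUC : U.map C * (star U).map C = 1 := by
    rw [← Matrix.map_mul, h1, Matrix.map_one C (map_zero C) (map_one C)]
  have hcm : charmatrix A = U.map C * charmatrix D * (star U).map C := by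
    subst hA
    rw [charmatrix, charmatrix, RingHom.mapMatrix_apply, RingHom.mapMatrix_apply]
    rw [Matrix.map_mul, Matrix.map_mul]
    rw [Matrix.mul_sub, Matrix.sub_mul]
    congr 1
    rw [Matrix.scalar_apply, ← Matrix.smul_one_eq_diagonal, Matrix.mul_smul, Matrix.smul_mul,
      Matrix.mul_one, hUC]
  rw [Matrix.charpoly, Matrix.charpoly, hcm, Matrix.det_mul, Matrix.det_mul]
  rw [mul_comm, ← mul_assoc, mul_comm ((star U).map C).det, ← Matrix.det_mul, hUC,
    Matrix.det_one, one_mul]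

lemma charpoly_diagonal {n : ℕ} (d : Fin n → ℝ) :
    (Matrix.diagonal d).charpoly = ∏ i, (X - C (d i)) := by
  rw [Matrix.charpoly]
  have : charmatrix (Matrix.diagonal d) = Matrix.diagonal (fun i => (X : ℝ[X]) - C (d i)) := by
    ext i j
    by_cases h : i = j
    · subst h; rw [charmatrix_apply_eq, Matrix.diagonal_apply_eq, Matrix.diagonal_apply_eq]
    · rw [charmatrix_apply_ne _ _ _ h, Matrix.diagonal_apply_ne _ h,
        Matrix.diagonal_apply_ne _ h, map_zero, neg_zero]
  rw [this, Matrix.det_diagonal]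

lemma hermitian_charpoly_eq_prod {n : ℕ} (A : Matrix (Fin n) (Fin n) ℝ)
    (hA : A.IsHermitian) : A.charpoly = ∏ i, (X - C (hA.eigenvalues i)) := by
  have hspec := hA.spectral_theorem
  rw [RCLike.ofReal_real_eq_id] at hspec
  have h1 : (hA.eigenvectorUnitary : Matrix (Fin n) (Fin n) ℝ) *
      star (hA.eigenvectorUnitary : Matrix (Fin n) (Fin n) ℝ) = 1 :=
    Matrix.mem_unitaryGroup_iff.mp hA.eigenvectorUnitary.2
  rw [conj_charpoly _ _ _ h1 (by simpa using hspec), charpoly_diagonal]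

/-- For the broom `T₂` with `N ≥ 4`, the characteristic polynomial of the
Laplacian is `λ (λ−1)^{N−4} (λ³ − (N+2)λ² − (2−3N)λ − N)`, and the largest
Laplacian eigenvalue exceeds `Δ + 1 = N − 1`, where `Δ = N − 2` is the maximum
degree. -/
theorem stmt_15 {N : ℕ} (hN : 4 ≤ N)
    (L : Matrix (Fin N) (Fin N) ℝ)
    (hLdef : L = Matrix.diagonal (fun i => ((broomGraph N).degree i : ℝ)) -
      (broomGraph N).adjMatrix ℝ)
    (hL : L.IsHermitian) :
    L.charpoly = X * (X - 1) ^ (N - 4) *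
        (X ^ 3 - C ((N : ℝ) + 2) * X ^ 2 - C (2 - 3 * (N : ℝ)) * X - C (N : ℝ)) ∧
      (broomGraph N).maxDegree = N - 2 ∧
      ((N : ℝ) - 2) + 1 < ⨆ i, hL.eigenvalues i := by
  have hcp := broom_charpoly hN L hLdef
  refine ⟨hcp, broom_maxDegree hN, ?_⟩
  have h4 : (4 : ℝ) ≤ (N : ℝ) := by exact_mod_cast hN
  have heval : (∏ i, ((N : ℝ) - 1 - hL.eigenvalues i)) < 0 := by
    have h1 : L.charpoly.eval ((N : ℝ) - 1) = ∏ i, ((N : ℝ) - 1 - hL.eigenvalues i) := by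
      rw [hermitian_charpoly_eq_prod L hL, eval_prod]
      exact Finset.prod_congr rfl fun i _ => by simp
    have h2 : L.charpoly.eval ((N : ℝ) - 1) = ((N : ℝ) - 1) * ((N : ℝ) - 2) ^ (N - 4) * (-1) := by
      rw [hcp]
      simp only [eval_mul, eval_pow, eval_sub, eval_C, eval_X, eval_one, eval_ofNat]
      rw [show (N : ℝ) - 1 - 1 = (N : ℝ) - 2 by ring]
      rw [show ((N : ℝ) - 1) ^ 3 - ((N : ℝ) + 2) * ((N : ℝ) - 1) ^ 2 -
        (2 - 3 * (N : ℝ)) * ((N : ℝ) - 1) - (N : ℝ) = -1 by ring]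
    rw [← h1, h2]
    have hb1 : (0 : ℝ) < (N : ℝ) - 1 := by linarith
    have hb2 : (0 : ℝ) < ((N : ℝ) - 2) ^ (N - 4) := pow_pos (by linarith) _
    nlinarith [mul_pos hb1 hb2]
  obtain ⟨i, hi⟩ : ∃ i, (N : ℝ) - 1 - hL.eigenvalues i < 0 := by
    by_contra h
    push_neg at h
    exact absurd (Finset.prod_nonneg (fun i _ => h i)) (not_le.mpr heval)
  have hle : hL.eigenvalues i ≤ ⨆ j, hL.eigenvalues j :=
    le_ciSup (Set.Finite.bddAbove (Set.finite_range _)) i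
  linarith
end
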